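/- Let T > 0 and let g ∈ L²(AddCircle T; ℂ) with first Fourier coefficient ĝ(1) ≠ 0. Then the family of dilations (gₙ)_{n ∈ ℕ+}, where gₙ(x) = g(n • x), is linearly independent in L²(AddCircle T). -/

import Mathlib

/-!
The `n`-th dilation `x ↦ g (n • x)` is invariant under translation by `T / n`, so its Fourier
coefficients vanish off `nℤ`, while its coefficient at `n` is `ĝ(1)`. Hence the coefficient at
frequency `n` of a combination `∑ₖ cₖ g (k • x)` only involves the `k ∣ n`; if the combination
vanishes, strong induction on `n` kills all `cₖ` with `k < n` and leaves `cₙ ĝ(1) = 0`.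
-/

open MeasureTheory AddCircle

section

variable {T : ℝ}

theorem fourier_nsmul (m : ℤ) (n : ℕ) (x : AddCircle T) :
    fourier m (n • x) = fourier (n * m) x := by
  rw [fourier_apply, fourier_apply, ← natCast_zsmul, smul_smul, mul_comm]

theorem fourier_apply_add (m : ℤ) (x y : AddCircle T) :
    fourier m (x + y) = fourier m x * fourier m y := by
  simp only [fourier_apply, smul_add, toCircle_add, Circle.coe_mul]

variable [hT : Fact (0 < T)] {E : Type*} [NormedAddCommGroup E] [NormedSpace ℂ E]

theorem AddCircle.measurePreserving_nsmul {n : ℕ} (hn : n ≠ 0) :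
    MeasurePreserving (fun x : AddCircle T => n • x) haarAddCircle haarAddCircle := by
  simpa only [natCast_zsmul] using
    Measure.measurePreserving_zsmul haarAddCircle (Int.natCast_ne_zero.mpr hn)

theorem fourierCoeff_comp_nsmul_natCast_mul {g : AddCircle T → E}
    (hg : AEStronglyMeasurable g haarAddCircle) {n : ℕ} (hn : n ≠ 0) (m : ℤ) :
    fourierCoeff (fun x => g (n • x)) (n * m) = fourierCoeff g m := by
  have hn' := measurePreserving_nsmul (T := T) hn
  have hF : AEStronglyMeasurable (fun y => fourier (-m) y • g y) haarAddCircle :=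
    (map_continuous _).aestronglyMeasurable.smul hg
  simp_rw [fourierCoeff, ← mul_neg, ← fourier_nsmul]
  conv_rhs => rw [← hn'.map_eq]
  exact (integral_map hn'.aemeasurable (hn'.map_eq ▸ hF)).symm

theorem fourierCoeff_eq_zero_of_add_right_eq {f : AddCircle T → E} {t : AddCircle T}
    (hf : ∀ x, f (x + t) = f x) {m : ℤ} (hm : fourier m t ≠ 1) : fourierCoeff f m = 0 := by
  have hc : fourier (-m) t ≠ 1 := by
    rwa [fourier_neg, ne_eq, map_eq_one_iff _ (RingHom.injective _)]
  have key : fourierCoeff f m = fourier (-m) t • fourierCoeff f m := by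
    conv_lhs => rw [fourierCoeff, ← integral_add_right_eq_self _ t]
    rw [fourierCoeff, ← integral_smul]
    congr 1 with x
    rw [fourier_apply_add, hf, mul_comm, mul_smul]
  have : (1 - fourier (-m) t) • fourierCoeff f m = 0 := by
    rw [sub_smul, one_smul, ← key, sub_self]
  exact (smul_eq_zero.mp this).resolve_left (sub_ne_zero.mpr hc.symm)

theorem fourier_coe_div_natCast_ne_one {n : ℕ} (hn : n ≠ 0) {m : ℤ} (hm : ¬ (n : ℤ) ∣ m) :
    fourier m ((T / n : ℝ) : AddCircle T) ≠ 1 := by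
  intro h
  rw [fourier_apply, Circle.coe_eq_one, ← toCircle_zero,
    (injective_toCircle hT.out.ne').eq_iff, ← coe_zsmul, coe_eq_zero_iff] at h
  obtain ⟨k, hk⟩ := h
  refine hm ⟨k, ?_⟩
  rw [zsmul_eq_mul, zsmul_eq_mul, mul_div_assoc', eq_div_iff (Nat.cast_ne_zero.mpr hn)] at hk
  have : (m : ℝ) = n * k := mul_right_cancel₀ hT.out.ne' (by linear_combination -hk)
  exact_mod_cast this

theorem fourierCoeff_comp_nsmul_eq_zero (g : AddCircle T → E) {n : ℕ} (hn : n ≠ 0) {m : ℤ}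
    (hm : ¬ (n : ℤ) ∣ m) : fourierCoeff (fun x => g (n • x)) m = 0 := by
  refine fourierCoeff_eq_zero_of_add_right_eq (fun x => ?_) (fourier_coe_div_natCast_ne_one hn hm)
  rw [nsmul_add, ← coe_nsmul, nsmul_eq_mul, mul_div_cancel₀ _ (Nat.cast_ne_zero.mpr hn),
    coe_period, add_zero]

theorem sum_mul_fourierCoeff_comp_nsmul_of_forall_lt {g : AddCircle T → ℂ}
    (hg : AEStronglyMeasurable g haarAddCircle) {s : Finset ℕ+} {coef : ℕ+ → ℂ} {n : ℕ+}
    (hn : n ∈ s) (hlt : ∀ k ∈ s, k < n → coef k = 0) :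
    ∑ k ∈ s, coef k * fourierCoeff (fun x => g ((k : ℕ) • x)) n = coef n * fourierCoeff g 1 := by
  rw [Finset.sum_eq_single_of_mem n hn]
  · simpa using congrArg (coef n * ·) (fourierCoeff_comp_nsmul_natCast_mul hg n.ne_zero 1)
  intro k hk hkn
  rcases lt_or_gt_of_ne hkn with hkn | hkn
  · rw [hlt k hk hkn, zero_mul]
  · rw [fourierCoeff_comp_nsmul_eq_zero g k.ne_zero ?_, mul_zero]
    exact fun hdvd => absurd (Int.le_of_dvd (by positivity) hdvd) (by exact_mod_cast hkn.not_ge)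

end

/-- If `g ∈ L²(AddCircle T; ℂ)` has first Fourier coefficient `ĝ(1) ≠ 0`, then the family
of dilations `gₙ(x) = g (n • x)`, `n ∈ ℕ+`, is linearly independent in `L²`: any finite
linear combination vanishing almost everywhere has all its coefficients zero. -/
theorem statement5 (T : ℝ) [hT : Fact (0 < T)] (g : AddCircle T → ℂ)
    (hg : MemLp g 2 AddCircle.haarAddCircle) (h1 : fourierCoeff g 1 ≠ 0)
    (s : Finset ℕ+) (coef : ℕ+ → ℂ)
    (hzero : ∀ᵐ x ∂AddCircle.haarAddCircle, ∑ n ∈ s, coef n * g ((n : ℕ) • x) = 0) :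
    ∀ n ∈ s, coef n = 0 := by
  have hint : ∀ k ∈ s, Integrable (fun x => coef k * g ((k : ℕ) • x)) haarAddCircle :=
    fun k _ => ((measurePreserving_nsmul k.ne_zero).integrable_comp_of_integrable
      (hg.integrable one_le_two)).const_mul _
  have hcoeff (m : ℤ) : ∑ k ∈ s, coef k * fourierCoeff (fun x => g ((k : ℕ) • x)) m = 0 := by
    have h := congrFun (fourierCoeff.sum s (fun k x => coef k * g ((k : ℕ) • x)) hint) m
    rw [Finset.sum_fn, fourierCoeff_congr_ae hzero, Finset.sum_apply] at h
    simp only [fourierCoeff.const_mul] at h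
    rw [← h]
    simp [fourierCoeff]
  intro n
  induction n using PNat.strongInductionOn with
  | _ n ih =>
    intro hn
    have h := (sum_mul_fourierCoeff_comp_nsmul_of_forall_lt hg.aestronglyMeasurable hn
      fun k hk hkn => ih k hkn hk).symm.trans (hcoeff n)
    exact (mul_eq_zero.mp h).resolve_right h1
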